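/- With notation as in the structure theory of flag-transitive subgroups of a regular incidence complex: for any subset Ω of the base flag Φ, the elementwise stabilizer Λ_Ω equals the subgroup generated by those R_i with F_i ∉ Ω. -/

import Mathlib

universe u

variable {α : Type u}

/-- A ranked partial order `(α, ≤)` with rank function `rk` is an incidence complex of
rank `n`: ranks run from `-1` to `n` and are strictly monotone, there are unique minimal
and maximal faces, every flag (maximal chain) contains a face of each rank `-1,…,n` (hence
has exactly `n+2` faces), the complex is strongly flag-connected, and between any two
incident faces of ranks `j-1` and `j+1` there are at least two faces of rank `j`. -/
structure IsIncidenceComplex (n : ℕ) [PartialOrder α] (rk : α → ℤ) : Prop where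
  rk_strictMono : ∀ {F G : α}, F < G → rk F < rk G
  rk_range : ∀ F : α, -1 ≤ rk F ∧ rk F ≤ n
  exists_bot : ∃ B : α, rk B = -1 ∧ ∀ F : α, B ≤ F
  exists_top : ∃ T : α, rk T = n ∧ ∀ F : α, F ≤ T
  flag_rk : ∀ Φ : Set α, IsMaxChain (· ≤ ·) Φ → ∀ j : ℤ, -1 ≤ j → j ≤ n →
    ∃ F ∈ Φ, rk F = j
  strongly_connected : ∀ Φ Ψ : Set α, IsMaxChain (· ≤ ·) Φ → IsMaxChain (· ≤ ·) Ψ →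
    Relation.ReflTransGen
      (fun A B => IsMaxChain (· ≤ ·) A ∧ IsMaxChain (· ≤ ·) B ∧ Φ ∩ Ψ ⊆ A ∧ Φ ∩ Ψ ⊆ B ∧
        ∃ F G, F ∈ A ∧ G ∈ B ∧ F ≠ G ∧ A \ {F} = B \ {G}) Φ Ψ
  diamond_ge_two : ∀ F G : α, F < G → rk G = rk F + 2 →
    ∃ H₁ H₂ : α, H₁ ≠ H₂ ∧ F < H₁ ∧ H₁ < G ∧ F < H₂ ∧ H₂ < G

/-- Two flags are `i`-adjacent when they differ in exactly one face, of rank `i`. -/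
def IAdjacent [PartialOrder α] (rk : α → ℤ) (i : ℤ) (Φ Ψ : Set α) : Prop :=
  ∃ F G, F ∈ Φ ∧ G ∈ Ψ ∧ F ≠ G ∧ rk F = i ∧ rk G = i ∧ Φ \ {F} = Ψ \ {G}

/-- The group of order automorphisms of `α`, as a subgroup of the permutations of `α`. -/
def orderAutGroup (α : Type u) [PartialOrder α] : Subgroup (Equiv.Perm α) where
  carrier := {φ | ∀ a b : α, φ a ≤ φ b ↔ a ≤ b}
  one_mem' := fun _ _ => Iff.rfl
  mul_mem' := by
    intro f g hf hg a b
    rw [Equiv.Perm.mul_apply, Equiv.Perm.mul_apply]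
    exact (hf (g a) (g b)).trans (hg a b)
  inv_mem' := by
    intro f hf a b
    conv_rhs => rw [← show f (f⁻¹ a) = a from f.apply_symm_apply a, ← show f (f⁻¹ b) = b from f.apply_symm_apply b]
    exact (hf _ _).symm

/-- `Λ` is a flag-transitive group of automorphisms. -/
def FlagTransitive [PartialOrder α] (Λ : Subgroup (Equiv.Perm α)) : Prop :=
  ∀ Φ Ψ : Set α, IsMaxChain (· ≤ ·) Φ → IsMaxChain (· ≤ ·) Ψ → ∃ γ ∈ Λ, γ '' Φ = Ψ

/-- The elementwise stabilizer in `Λ` of a set `Ω` of faces. -/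
def stabOf [PartialOrder α] (Λ : Subgroup (Equiv.Perm α)) (Ω : Set α) :
    Subgroup (Equiv.Perm α) where
  carrier := {γ | γ ∈ Λ ∧ ∀ x ∈ Ω, γ x = x}
  one_mem' := ⟨Λ.one_mem, fun _ _ => rfl⟩
  mul_mem' := by
    intro f g hf hg
    refine ⟨Λ.mul_mem hf.1 hg.1, fun x hx => ?_⟩
    rw [Equiv.Perm.mul_apply, hg.2 x hx, hf.2 x hx]
  inv_mem' := by
    intro f hf
    refine ⟨Λ.inv_mem hf.1, fun x hx => ?_⟩
    simpa using (congrArg (⇑f⁻¹) (hf.2 x hx)).symm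

/-- The distinguished subgroup `R_i` of `Λ` relative to a base flag enumerated by
`F : Fin n → α`: the elements of `Λ` fixing every base face `F j` with `j ≠ i`.  For
`i ∉ {0,…,n-1}` (e.g. `i = -1` or `i = n`) this is the stabilizer of the base flag. -/
def distinguishedSubgroup [PartialOrder α] {n : ℕ} (Λ : Subgroup (Equiv.Perm α))
    (F : Fin n → α) (i : ℤ) : Subgroup (Equiv.Perm α) :=
  stabOf Λ {x | ∃ j : Fin n, (j : ℤ) ≠ i ∧ x = F j}

/-!
An element `γ ∈ Λ_Ω` carries the base flag `Φ` to a flag `γΦ` containing `Ω`. Strong flag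
connectivity joins `Φ` to `γΦ` by a path of adjacent flags all containing `Ω`. By induction along
the path each flag on it is `δΦ` for some `δ` in the subgroup generated by the `R_i` with
`F_i ∉ Ω`: if `δΦ` and the next flag differ in their `i`-faces, then `δ⁻¹` of the next flag is
`i`-adjacent to `Φ`, so by flag-transitivity it is `ρΦ` for some `ρ ∈ R_i`, and `F_i ∉ Ω` because
`δ` fixes `Ω`. Finally `δ⁻¹γ` stabilizes `Φ`, hence fixes it facewise since automorphisms
preserve rank, and so lies in `R_{-1}`.
-/

lemma StrictMono.injOn_of_isChain {β : Type*} [PartialOrder α] [Preorder β] {f : α → β}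
    (hf : StrictMono f) {s : Set α} (hs : IsChain (· ≤ ·) s) : s.InjOn f := by
  intro x hx y hy hxy
  by_contra hne
  rcases hs hx hy hne with hle | hle
  · exact (hf (hle.lt_of_ne hne)).ne hxy
  · exact (hf (hle.lt_of_ne (Ne.symm hne))).ne' hxy

section OrderAut
variable [PartialOrder α] {φ : Equiv.Perm α}

def orderIsoOfMemOrderAutGroup (hφ : φ ∈ orderAutGroup α) : α ≃o α :=
  ⟨φ, fun {a b} => hφ a b⟩

lemma IsMaxChain.image_of_mem_orderAutGroup (hφ : φ ∈ orderAutGroup α) {Φ : Set α}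
    (hΦ : IsMaxChain (· ≤ ·) Φ) : IsMaxChain (· ≤ ·) (φ '' Φ) :=
  hΦ.image (orderIsoOfMemOrderAutGroup hφ)

end OrderAut

namespace IsIncidenceComplex

variable [PartialOrder α] {n : ℕ} {rk : α → ℤ}

lemma strictMono_rk (h : IsIncidenceComplex n rk) : StrictMono rk :=
  fun _ _ => h.rk_strictMono

lemma eq_of_rk_eq (h : IsIncidenceComplex n rk) {x y : α} (hxy : rk x = rk y)
    (hx : rk x = -1 ∨ rk x = n) : x = y := by
  obtain ⟨B, hB, hBle⟩ := h.exists_bot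
  obtain ⟨T, hT, hleT⟩ := h.exists_top
  have hbot : ∀ z, rk z = -1 → z = B := fun z hz =>
    ((hBle z).eq_or_lt.resolve_right fun hlt => by have := h.rk_strictMono hlt; omega).symm
  have htop : ∀ z, rk z = n → z = T := fun z hz =>
    (hleT z).eq_or_lt.resolve_right fun hlt => by have := h.rk_strictMono hlt; omega
  rcases hx with hx | hx
  · rw [hbot x hx, hbot y (hxy ▸ hx)]
  · rw [htop x hx, htop y (hxy ▸ hx)]

lemma rk_eq_neg_one_or_eq_rank_or_exists_fin (h : IsIncidenceComplex n rk) (x : α) :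
    (rk x = -1 ∨ rk x = n) ∨ ∃ i : Fin n, (i : ℤ) = rk x := by
  by_cases hx : rk x = -1 ∨ rk x = n
  · exact .inl hx
  have := h.rk_range x
  exact .inr ⟨⟨(rk x).toNat, by omega⟩, Int.toNat_of_nonneg (by omega)⟩

lemma exists_lt_rk_eq_sub_one (h : IsIncidenceComplex n rk) {x : α} (hx : 0 ≤ rk x) :
    ∃ y < x, rk y = rk x - 1 := by
  obtain ⟨Ψ, hΨ, hxΨ⟩ := (IsChain.singleton (r := (· ≤ ·)) (a := x)).exists_maxChain
  obtain ⟨y, hyΨ, hy⟩ := h.flag_rk Ψ hΨ (rk x - 1) (by omega)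
    (by have := (h.rk_range x).2; omega)
  refine ⟨y, ?_, hy⟩
  have hne : y ≠ x := fun e => by rw [e] at hy; omega
  refine ((hΨ.1.total hyΨ (hxΨ rfl)).resolve_right fun hxy => ?_).lt_of_ne hne
  have := h.rk_strictMono (hxy.lt_of_ne hne.symm)
  omega

lemma rk_le_rk_apply (h : IsIncidenceComplex n rk) {f : α → α} (hf : StrictMono f) (x : α) :
    rk x ≤ rk (f x) := by
  suffices ∀ k, -1 ≤ k → ∀ x, rk x = k → rk x ≤ rk (f x) from this _ (h.rk_range x).1 x rfl
  intro k hk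
  induction k, hk using Int.leInduction with
  | base => intro x hx; have := (h.rk_range (f x)).1; omega
  | succ k hk ih =>
    intro x hx
    obtain ⟨y, hyx, hy⟩ := h.exists_lt_rk_eq_sub_one (x := x) (by omega)
    have := ih y (by omega)
    have := h.rk_strictMono (hf hyx)
    omega

lemma rk_apply (h : IsIncidenceComplex n rk) (e : α ≃o α) (x : α) : rk (e x) = rk x := by
  have h₁ := h.rk_le_rk_apply e.strictMono x
  have h₂ := h.rk_le_rk_apply e.symm.strictMono (e x)
  rw [e.symm_apply_apply] at h₂
  omega

lemma rk_apply_of_mem_orderAutGroup (h : IsIncidenceComplex n rk) {φ : Equiv.Perm α}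
    (hφ : φ ∈ orderAutGroup α) (x : α) : rk (φ x) = rk x :=
  h.rk_apply (orderIsoOfMemOrderAutGroup hφ) x

lemma rk_eq_of_diff_eq (h : IsIncidenceComplex n rk) {Φ Ψ : Set α} (hΦ : IsChain (· ≤ ·) Φ)
    (hΨ : IsMaxChain (· ≤ ·) Ψ) {x y : α} (hx : x ∈ Φ) (hdiff : Φ \ {x} = Ψ \ {y}) :
    rk y = rk x := by
  obtain ⟨z, hzΨ, hz⟩ := h.flag_rk Ψ hΨ (rk x) (h.rk_range x).1 (h.rk_range x).2
  obtain rfl | hzy := eq_or_ne z y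
  · exact hz
  have hzΦ : z ∈ Φ \ {x} := hdiff ▸ ⟨hzΨ, hzy⟩
  exact absurd (h.strictMono_rk.injOn_of_isChain hΦ hzΦ.1 hx hz) hzΦ.2

variable {Λ : Subgroup (Equiv.Perm α)} {Φ : Set α}

lemma mem_stabOf_of_image_eq (h : IsIncidenceComplex n rk) (hΛ : Λ ≤ orderAutGroup α)
    (hΦ : IsChain (· ≤ ·) Φ) {φ : Equiv.Perm α} (hφ : φ ∈ Λ) (hφΦ : φ '' Φ = Φ)
    {Ω : Set α} (hΩ : Ω ⊆ Φ) : φ ∈ stabOf Λ Ω :=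
  ⟨hφ, fun x hx => h.strictMono_rk.injOn_of_isChain hΦ (hφΦ ▸ Set.mem_image_of_mem φ (hΩ hx))
    (hΩ hx) (h.rk_apply_of_mem_orderAutGroup (hΛ hφ) x)⟩

variable {F : Fin n → α}

lemma distinguishedSubgroup_le_stabOf (h : IsIncidenceComplex n rk) (hΛ : Λ ≤ orderAutGroup α)
    (hΦ : IsChain (· ≤ ·) Φ) (hF : ∀ i : Fin n, F i ∈ Φ ∧ rk (F i) = (i : ℤ)) {Ω : Set α}
    (hΩ : Ω ⊆ Φ) {i : ℤ} (hi : ∀ j : Fin n, (j : ℤ) = i → F j ∉ Ω) :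
    distinguishedSubgroup Λ F i ≤ stabOf Λ Ω := by
  rintro γ ⟨hγ, hγF⟩
  refine ⟨hγ, fun x hx => ?_⟩
  have hrk := h.rk_apply_of_mem_orderAutGroup (hΛ hγ) x
  obtain hext | ⟨j, hj⟩ := h.rk_eq_neg_one_or_eq_rank_or_exists_fin x
  · exact h.eq_of_rk_eq hrk (hrk ▸ hext)
  obtain rfl : x = F j :=
    h.strictMono_rk.injOn_of_isChain hΦ (hΩ hx) (hF j).1 (by rw [(hF j).2, hj])
  exact hγF _ ⟨j, fun hji => hi j hji hx, rfl⟩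

lemma mem_distinguishedSubgroup_of_diff_subset (h : IsIncidenceComplex n rk)
    (hΛ : Λ ≤ orderAutGroup α) (hΦ : IsChain (· ≤ ·) Φ)
    (hF : ∀ i : Fin n, F i ∈ Φ ∧ rk (F i) = (i : ℤ)) {γ : Equiv.Perm α} (hγ : γ ∈ Λ)
    {x : α} {i : ℤ} (hx : rk x = i) (hsub : Φ \ {x} ⊆ γ '' Φ) :
    γ ∈ distinguishedSubgroup Λ F i := by
  refine ⟨hγ, ?_⟩
  rintro _ ⟨j, hji, rfl⟩
  have hγΦ : IsChain (· ≤ ·) (γ '' Φ) := hΦ.image (orderIsoOfMemOrderAutGroup (hΛ hγ))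
  have hFj : F j ∈ γ '' Φ := hsub ⟨(hF j).1, fun e => hji (by rw [← (hF j).2, e, hx])⟩
  exact h.strictMono_rk.injOn_of_isChain hγΦ (Set.mem_image_of_mem γ (hF j).1) hFj
    (h.rk_apply_of_mem_orderAutGroup (hΛ hγ) _)

lemma exists_mem_distinguishedSubgroup_image_eq (h : IsIncidenceComplex n rk)
    (hΛ : Λ ≤ orderAutGroup α) (htrans : FlagTransitive Λ) (hΦ : IsMaxChain (· ≤ ·) Φ)
    (hF : ∀ i : Fin n, F i ∈ Φ ∧ rk (F i) = (i : ℤ)) {Ψ : Set α} (hΨ : IsMaxChain (· ≤ ·) Ψ)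
    {x y : α} (hx : x ∈ Φ) (hxy : x ≠ y) (hdiff : Φ \ {x} = Ψ \ {y}) :
    ∃ i : Fin n, x = F i ∧ ∃ ρ ∈ distinguishedSubgroup Λ F i, ρ '' Φ = Ψ := by
  have hrk := h.rk_eq_of_diff_eq hΦ.1 hΨ hx hdiff
  obtain hext | ⟨i, hi⟩ := h.rk_eq_neg_one_or_eq_rank_or_exists_fin x
  · exact absurd (h.eq_of_rk_eq hrk.symm hext) hxy
  obtain ⟨ρ, hρ, hρΦ⟩ := htrans Φ Ψ hΦ hΨ
  refine ⟨i, h.strictMono_rk.injOn_of_isChain hΦ.1 hx (hF i).1 (by rw [(hF i).2, hi]), ρ,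
    h.mem_distinguishedSubgroup_of_diff_subset hΛ hΦ.1 hF hρ hi.symm ?_, hρΦ⟩
  rw [hρΦ, hdiff]
  exact Set.sdiff_subset

lemma exists_mem_image_eq_of_reflTransGen (h : IsIncidenceComplex n rk)
    (hΛ : Λ ≤ orderAutGroup α) (htrans : FlagTransitive Λ) (hΦ : IsMaxChain (· ≤ ·) Φ)
    (hF : ∀ i : Fin n, F i ∈ Φ ∧ rk (F i) = (i : ℤ)) {Ω : Set α} {N : Subgroup (Equiv.Perm α)}
    (hN : N ≤ stabOf Λ Ω) (hRN : ∀ i : Fin n, F i ∉ Ω → distinguishedSubgroup Λ F i ≤ N)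
    {Ψ : Set α} (hpath : Relation.ReflTransGen (fun A B => IsMaxChain (· ≤ ·) B ∧ Ω ⊆ B ∧
      ∃ x y, x ∈ A ∧ y ∈ B ∧ x ≠ y ∧ A \ {x} = B \ {y}) Φ Ψ) :
    ∃ δ ∈ N, δ '' Φ = Ψ := by
  induction hpath with
  | refl => exact ⟨1, N.one_mem, by simp⟩
  | @tail _ Ψ _ hstep ih =>
    obtain ⟨δ, hδN, rfl⟩ := ih
    obtain ⟨hΨ, hΩΨ, _, y, ⟨x, hx, rfl⟩, hy, hxy, hdiff⟩ := hstep
    obtain ⟨hδΛ, hδΩ⟩ := hN hδN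
    have hdiff' : Φ \ {x} = ⇑δ⁻¹ '' Ψ \ {δ⁻¹ y} := by
      rw [← Set.image_singleton (f := ⇑δ⁻¹), ← Set.image_sdiff (Equiv.injective _), ← hdiff,
        ← Set.image_singleton, ← Set.image_sdiff δ.injective, Set.image_image]
      simp
    obtain ⟨i, rfl, ρ, hρ, hρΦ⟩ := h.exists_mem_distinguishedSubgroup_image_eq hΛ htrans hΦ hF
      (hΨ.image_of_mem_orderAutGroup (hΛ (inv_mem hδΛ))) hx (fun e => hxy (by simp [e])) hdiff'
    have hFi : F i ∉ Ω := by
      intro hmem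
      have hδFi : δ (F i) ∈ Ψ \ {y} := ⟨(hδΩ _ hmem).symm ▸ hΩΨ hmem, hxy⟩
      exact (hdiff ▸ hδFi).2 rfl
    refine ⟨δ * ρ, N.mul_mem hδN (hRN i hFi hρ), ?_⟩
    rw [Equiv.Perm.coe_mul, Set.image_comp, hρΦ, Set.image_image]
    simp

end IsIncidenceComplex

/-- For any subset `Ω` of the base flag `Φ`, the elementwise stabilizer
`Λ_Ω` equals the subgroup generated by those `R i` with `F i ∉ Ω` (together with the flag
stabilizer `R (-1) = Λ_Φ`, which is contained in every `R i`, so that the convention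
`Λ_∅ = Λ_Φ` is respected when `Ω = Φ`). -/
theorem stabilizer_eq_generated_by_complement
    {α : Type u} [PartialOrder α] {n : ℕ} (rk : α → ℤ)
    (h : IsIncidenceComplex n rk)
    (Λ : Subgroup (Equiv.Perm α)) (hΛ : Λ ≤ orderAutGroup α)
    (htrans : FlagTransitive Λ)
    (Φ : Set α) (hΦ : IsMaxChain (· ≤ ·) Φ)
    (F : Fin n → α) (hF : ∀ i : Fin n, F i ∈ Φ ∧ rk (F i) = (i : ℤ))
    (Ω : Set α) (hΩ : Ω ⊆ Φ) :
    stabOf Λ Ω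
      = distinguishedSubgroup Λ F (-1)
          ⊔ ⨆ i : Fin n, ⨆ _ : F i ∉ Ω, distinguishedSubgroup Λ F (i : ℤ) := by
  set N := distinguishedSubgroup Λ F (-1)
    ⊔ ⨆ i : Fin n, ⨆ _ : F i ∉ Ω, distinguishedSubgroup Λ F (i : ℤ)
  have hN : N ≤ stabOf Λ Ω :=
    sup_le (h.distinguishedSubgroup_le_stabOf hΛ hΦ.1 hF hΩ fun j hj => by omega)
      (iSup₂_le fun i hi => h.distinguishedSubgroup_le_stabOf hΛ hΦ.1 hF hΩ
        fun j hj => by rwa [Fin.ext (by omega : (j : ℕ) = i)])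
  refine le_antisymm (fun γ hγ => ?_) hN
  obtain ⟨δ, hδ, hδΦ⟩ := h.exists_mem_image_eq_of_reflTransGen hΛ htrans hΦ hF hN
    (fun i hi => le_sup_of_le_right (le_iSup₂_of_le i hi le_rfl))
    (Relation.ReflTransGen.mono (by
      rintro _ _ ⟨-, hB, -, hsub, hstep⟩
      exact ⟨hB, fun x hx => hsub ⟨hΩ hx, x, hΩ hx, hγ.2 x hx⟩, hstep⟩) _ _
      (h.strongly_connected Φ (γ '' Φ) hΦ (hΦ.image_of_mem_orderAutGroup (hΛ hγ.1))))
  have hδγ : δ⁻¹ * γ ∈ distinguishedSubgroup Λ F (-1) := by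
    refine h.mem_stabOf_of_image_eq hΛ hΦ.1 (Λ.mul_mem (Λ.inv_mem (hN hδ).1) hγ.1) ?_
      (by rintro _ ⟨j, -, rfl⟩; exact (hF j).1)
    rw [Equiv.Perm.coe_mul, Set.image_comp, ← hδΦ, Set.image_image]
    simp
  simpa using N.mul_mem hδ ((le_sup_left : distinguishedSubgroup Λ F (-1) ≤ N) hδγ)
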